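/- Let X be a completely regular Hausdorff topological space and let E be a nonempty subspace of X that is separable and completely metrizable. Then E is an H₁-retract of X. -/

import Mathlib

/-- A set is an Fσ-set if it is a countable union of closed sets. -/
def IsFsigma {X : Type*} [TopologicalSpace X] (A : Set X) : Prop :=
  ∃ F : ℕ → Set X, (∀ n, IsClosed (F n)) ∧ A = ⋃ n, F n

/-- A mapping is of the first Lebesgue class if the preimage of every open set is Fσ. -/
def LebesgueClassOne {X Y : Type*} [TopologicalSpace X] [TopologicalSpace Y] (g : X → Y) : Prop :=
  ∀ V : Set Y, IsOpen V → IsFsigma (g ⁻¹' V)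

/-- `E` is an H₁-retract of `X` if there is a first Lebesgue class map `r : X → E`
fixing the points of `E`. -/
def IsH1Retract {X : Type*} [TopologicalSpace X] (E : Set X) : Prop :=
  ∃ r : X → E, (∀ x : E, r x = x) ∧ LebesgueClassOne r
/-- A topological space is completely metrizable if its topology is induced by some
complete metric. -/
def CompletelyMetrizable (X : Type*) [t : TopologicalSpace X] : Prop :=
  ∃ m : MetricSpace X, m.toUniformSpace.toTopologicalSpace = t ∧ @CompleteSpace X m.toUniformSpace

/-!
Fix a complete metric on `E` and, for every `k`, a countable cover of `E` by open Fσ (cozero)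
subsets of `X` whose traces on `E` have diameter at most `2⁻ᵏ`; complete regularity and the
second countability of `E` provide these. Every `x : X` greedily chooses, level by level, the
first member of the cover that contains it and whose intersection with the previously chosen
ones still meets `E`; the `k`-th approximation of `r x` is a point of `E` in that cell.
Consecutive approximations are `2⁻ᵏ`-close, so they converge uniformly; on `E` the greedy choice
never gets stuck, so the limit `r` fixes `E`. Each approximation takes countably many values on
Fσ level sets, and a uniform limit of maps of the first class is of the first class.
-/

open Set Filter Topology Metric

section Fsigma

variable {X : Type*} [TopologicalSpace X]

theorem isFsigma_iff_isGδ_compl {A : Set X} : IsFsigma A ↔ IsGδ Aᶜ := by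
  rw [isGδ_iff_eq_iInter_nat]
  constructor
  · rintro ⟨F, hF, rfl⟩
    exact ⟨fun n => (F n)ᶜ, fun n => (hF n).isOpen_compl, compl_iUnion F⟩
  · rintro ⟨U, hU, hA⟩
    exact ⟨fun n => (U n)ᶜ, fun n => (hU n).isClosed_compl, by
      rw [← compl_iInter, ← hA, compl_compl]⟩

theorem IsClosed.isFsigma {A : Set X} (h : IsClosed A) : IsFsigma A :=
  isFsigma_iff_isGδ_compl.2 h.isOpen_compl.isGδ

theorem IsOpen.isFsigma [PerfectlyNormalSpace X] {A : Set X} (h : IsOpen A) : IsFsigma A :=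
  isFsigma_iff_isGδ_compl.2 h.isClosed_compl.isGδ

theorem IsFsigma.inter {A B : Set X} (hA : IsFsigma A) (hB : IsFsigma B) : IsFsigma (A ∩ B) := by
  rw [isFsigma_iff_isGδ_compl, compl_inter] at *
  exact hA.union hB

theorem isFsigma_iUnion {ι : Type*} [Countable ι] {A : ι → Set X} (h : ∀ i, IsFsigma (A i)) :
    IsFsigma (⋃ i, A i) := by
  simp_rw [isFsigma_iff_isGδ_compl, compl_iUnion] at *
  exact .iInter h

theorem IsFsigma.preimage {Y : Type*} [TopologicalSpace Y] {f : X → Y} (hf : Continuous f)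
    {A : Set Y} (h : IsFsigma A) : IsFsigma (f ⁻¹' A) := by
  rw [isFsigma_iff_isGδ_compl] at *
  exact h.preimage hf

theorem exists_isOpen_isFsigma_mem_subset [CompletelyRegularSpace X] {x : X} {W : Set X}
    (hW : IsOpen W) (hx : x ∈ W) : ∃ C, IsOpen C ∧ IsFsigma C ∧ x ∈ C ∧ C ⊆ W := by
  obtain ⟨f, hf, hfx, hfW⟩ :=
    CompletelyRegularSpace.completely_regular x Wᶜ hW.isClosed_compl (not_not_intro hx)
  refine ⟨f ⁻¹' Iio 1, isOpen_Iio.preimage hf, isOpen_Iio.isFsigma.preimage hf, by simp [hfx],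
    fun y hy => not_not.1 fun hyW => ?_⟩
  simp [hfW hyW] at hy

end Fsigma

section LebesgueClassOne

variable {X Y : Type*} [TopologicalSpace X] [TopologicalSpace Y]

theorem isFsigma_setOf_apply_eq {α β : Type*} [Countable α] {g : X → α} {G : α → X → β}
    (hg : ∀ a, IsFsigma {x | g x = a}) (hG : ∀ a b, IsFsigma {x | G a x = b}) (b : β) :
    IsFsigma {x | G (g x) x = b} := by
  have : {x | G (g x) x = b} = ⋃ a, {x | g x = a} ∩ {x | G a x = b} := by
    ext x
    simp only [mem_ofPred_eq, mem_iUnion, mem_inter_iff]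
    exact ⟨fun h => ⟨g x, rfl, h⟩, fun ⟨a, ha, h⟩ => ha ▸ h⟩
  rw [this]
  exact isFsigma_iUnion fun a => (hg a).inter (hG a b)

theorem lebesgueClassOne_comp_of_isFsigma_fibers {α : Type*} [Countable α] {g : X → α}
    (hg : ∀ a, IsFsigma {x | g x = a}) (h : α → Y) : LebesgueClassOne (h ∘ g) := by
  intro V _
  have : (h ∘ g) ⁻¹' V = ⋃ a : h ⁻¹' V, {x | g x = a} := by
    ext x
    simp
  rw [this]
  exact isFsigma_iUnion fun a => hg a

theorem TendstoUniformly.lebesgueClassOne {Y : Type*} [PseudoMetricSpace Y] {f : ℕ → X → Y}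
    {g : X → Y} (hf : ∀ n, LebesgueClassOne (f n)) (hfg : TendstoUniformly f g atTop) :
    LebesgueClassOne g := by
  intro V hV
  have hN : ∀ m : ℕ, ∃ N, ∀ x, dist (g x) (f N x) < 1 / (m + 1) := fun m =>
    ((Metric.tendstoUniformly_iff.1 hfg) _ Nat.one_div_pos_of_nat).exists
  choose N hN using hN
  set W : ℕ → Set Y := fun m =>
    thickening (1 / (m + 1)) {v | ball v (3 * (1 / (m + 1))) ⊆ V} with hW
  have : g ⁻¹' V = ⋃ m, f (N m) ⁻¹' W m := by
    ext x
    simp only [mem_preimage, mem_iUnion, hW, mem_thickening_iff, mem_ofPred_eq]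
    constructor
    · intro hx
      obtain ⟨δ, hδ, hball⟩ := Metric.isOpen_iff.1 hV _ hx
      obtain ⟨m, hm⟩ := exists_nat_one_div_lt (div_pos hδ three_pos)
      refine ⟨m, g x, (ball_subset_ball (by linarith)).trans hball, ?_⟩
      rw [dist_comm]
      exact hN m x
    · rintro ⟨m, v, hv, hxv⟩
      apply hv
      rw [mem_ball]
      calc dist (g x) v ≤ dist (g x) (f (N m) x) + dist (f (N m) x) v := dist_triangle _ _ _
        _ < 1 / (m + 1) + 1 / (m + 1) := add_lt_add (hN m x) hxv
        _ ≤ 3 * (1 / (m + 1)) := by linarith [Nat.one_div_pos_of_nat (α := ℝ) (n := m)]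
  rw [this]
  exact isFsigma_iUnion fun m => hf _ _ isOpen_thickening

end LebesgueClassOne

section FirstIndex

variable {X : Type*}

open Classical in
noncomputable def firstIndex (A : ℕ → Set X) (x : X) : Option ℕ :=
  if h : ∃ n, x ∈ A n then some (Nat.find h) else none

variable {A : ℕ → Set X} {x : X}

theorem firstIndex_eq_none_iff : firstIndex A x = none ↔ ∀ n, x ∉ A n := by
  classical
  unfold firstIndex
  split_ifs with h <;> simpa using h

theorem firstIndex_eq_some_iff {n : ℕ} :
    firstIndex A x = some n ↔ x ∈ A n ∧ ∀ m < n, x ∉ A m := by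
  classical
  unfold firstIndex
  split_ifs with h
  · rw [Option.some_inj, Nat.find_eq_iff]
  · push Not at h
    simp [h]

theorem isFsigma_setOf_firstIndex_eq [TopologicalSpace X] (hAo : ∀ n, IsOpen (A n))
    (hAf : ∀ n, IsFsigma (A n)) (o : Option ℕ) : IsFsigma {x | firstIndex A x = o} := by
  cases o with
  | none =>
    simp_rw [firstIndex_eq_none_iff, ← mem_compl_iff, ← mem_iInter, ofPred_mem_eq]
    exact (isClosed_iInter fun n => (hAo n).isClosed_compl).isFsigma
  | some n =>
    simp_rw [firstIndex_eq_some_iff, ← mem_compl_iff, ← mem_iInter₂, ofPred_and, ofPred_mem_eq]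
    exact (hAf n).inter (isClosed_biInter fun m _ => (hAo m).isClosed_compl).isFsigma

end FirstIndex

theorem exists_isOpen_isFsigma_cover_of_isInducing {X Y : Type*} [TopologicalSpace X]
    [CompletelyRegularSpace X] [PseudoMetricSpace Y] [SecondCountableTopology Y] [Nonempty Y]
    {j : Y → X} (hj : IsInducing j) {ε : ℝ} (hε : 0 < ε) :
    ∃ u : ℕ → Set X, (∀ n, IsOpen (u n)) ∧ (∀ n, IsFsigma (u n)) ∧ (∀ y, ∃ n, j y ∈ u n) ∧
      ∀ n a b, j a ∈ u n → j b ∈ u n → dist a b ≤ ε := by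
  have hC : ∀ y : Y, ∃ C, IsOpen C ∧ IsFsigma C ∧ j y ∈ C ∧ j ⁻¹' C ⊆ ball y (ε / 2) := by
    intro y
    obtain ⟨W, hW, hWy⟩ := hj.isOpen_iff.1 (isOpen_ball (x := y) (ε := ε / 2))
    obtain ⟨C, hCo, hCf, hyC, hCW⟩ :=
      exists_isOpen_isFsigma_mem_subset hW (hWy ▸ mem_ball_self (half_pos hε) : y ∈ j ⁻¹' W)
    exact ⟨C, hCo, hCf, hyC, hWy ▸ preimage_mono hCW⟩
  choose C hCo hCf hyC hCball using hC
  obtain ⟨T, hTc, hTU⟩ := TopologicalSpace.isOpen_iUnion_countable (fun y => j ⁻¹' C y)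
    fun y => (hCo y).preimage hj.continuous
  have hcover : ∀ y, ∃ t ∈ T, j y ∈ C t := by
    intro y
    have : y ∈ ⋃ t ∈ T, j ⁻¹' C t := hTU ▸ mem_iUnion.2 ⟨y, hyC y⟩
    simpa using this
  obtain ⟨g, rfl⟩ := hTc.exists_eq_range
    (let ⟨t, ht, _⟩ := hcover (Classical.arbitrary Y); ⟨t, ht⟩)
  refine ⟨C ∘ g, fun n => hCo _, fun n => hCf _, fun y => ?_, fun n a b ha hb => ?_⟩
  · obtain ⟨_, ⟨n, rfl⟩, hy⟩ := hcover y
    exact ⟨n, hy⟩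
  · calc dist a b ≤ dist a (g n) + dist b (g n) := dist_triangle_right _ _ _
      _ ≤ ε / 2 + ε / 2 := add_le_add (hCball _ ha).le (hCball _ hb).le
      _ = ε := add_halves ε

namespace GreedyRetraction

variable {X Y : Type*} (j : Y → X) (u : ℕ → ℕ → Set X)

-- `cell u [nₖ, …, n₀] = u k nₖ ∩ … ∩ u 0 n₀`: the most recent choice comes first.
def cell : List ℕ → Set X
  | [] => univ
  | n :: s => u s.length n ∩ cell s

def admissible (s : List ℕ) (n : ℕ) : Set X :=
  u s.length n ∩ {_x | (j ⁻¹' cell u (n :: s)).Nonempty}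

noncomputable def step (x : X) (s : List ℕ) : List ℕ :=
  (firstIndex (admissible j u s) x).elim s (· :: s)

noncomputable def branch (x : X) : ℕ → List ℕ
  | 0 => []
  | k + 1 => step j u x (branch x k)

noncomputable def center [Nonempty Y] (s : List ℕ) : Y :=
  Classical.epsilon fun y => j y ∈ cell u s

-- Shifted by one so that the cell defining `approx j u k x` lies in a member of level `k`.
noncomputable def approx [Nonempty Y] (k : ℕ) (x : X) : Y :=
  center j u (branch j u x (k + 1))

noncomputable def retraction [Nonempty Y] [TopologicalSpace Y] (x : X) : Y :=
  limUnder atTop fun k => approx j u k x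

theorem step_eq_self_or (x : X) (s : List ℕ) :
    step j u x s = s ∨ ∃ n, x ∈ admissible j u s n ∧ step j u x s = n :: s := by
  cases h : firstIndex (admissible j u s) x with
  | none => exact .inl (by simp [step, h])
  | some n => exact .inr ⟨n, (firstIndex_eq_some_iff.1 h).1, by simp [step, h]⟩

variable {j u}

theorem step_ne_self {x : X} {s : List ℕ} {n : ℕ} (hn : x ∈ admissible j u s n) :
    step j u x s ≠ s := by
  cases h : firstIndex (admissible j u s) x with
  | none => exact absurd hn (firstIndex_eq_none_iff.1 h n)
  | some m => simp [step, h]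

theorem mem_cell_branch [Nonempty Y] (x : X) :
    ∀ k, x ∈ cell u (branch j u x k) ∧ (j ⁻¹' cell u (branch j u x k)).Nonempty
  | 0 => ⟨mem_univ x, univ_nonempty⟩
  | k + 1 => by
    obtain ⟨hx, hne⟩ := mem_cell_branch x k
    rcases step_eq_self_or j u x (branch j u x k) with h | ⟨n, hn, h⟩
    · rw [branch, h]
      exact ⟨hx, hne⟩
    · rw [branch, h]
      exact ⟨⟨hn.1, hx⟩, hn.2⟩

theorem length_branch {x : X} :
    ∀ {k}, step j u x (branch j u x k) ≠ branch j u x k → (branch j u x k).length = k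
  | 0, _ => rfl
  | k + 1, h => by
    rcases step_eq_self_or j u x (branch j u x k) with h' | ⟨n, _, h'⟩
    · rw [branch, h'] at h
      exact absurd h' h
    · rw [branch, h', List.length_cons, length_branch (h' ▸ List.cons_ne_self n _)]

theorem center_mem [Nonempty Y] {s : List ℕ} (h : (j ⁻¹' cell u s).Nonempty) :
    j (center j u s) ∈ cell u s :=
  Classical.epsilon_spec h

section Fibers

variable [TopologicalSpace X] (hopen : ∀ k n, IsOpen (u k n)) (hfs : ∀ k n, IsFsigma (u k n))
include hopen hfs

theorem isFsigma_setOf_step_eq (s t : List ℕ) : IsFsigma {x | step j u x s = t} := by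
  refine isFsigma_setOf_apply_eq (g := firstIndex (admissible j u s))
    (G := fun o _ => o.elim s (· :: s)) (isFsigma_setOf_firstIndex_eq ?_ ?_)
    (fun _ _ => isClosed_const.isFsigma) t
  · exact fun n => (hopen _ _).inter isOpen_const
  · exact fun n => (hfs _ _).inter isClosed_const.isFsigma

theorem isFsigma_setOf_branch_eq : ∀ k s, IsFsigma {x | branch j u x k = s}
  | 0, s => isClosed_const (p := [] = s).isFsigma
  | k + 1, s => isFsigma_setOf_apply_eq (isFsigma_setOf_branch_eq k)
      (fun t => isFsigma_setOf_step_eq hopen hfs t) s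

theorem lebesgueClassOne_approx [Nonempty Y] [TopologicalSpace Y] (k : ℕ) :
    LebesgueClassOne (approx j u k) :=
  lebesgueClassOne_comp_of_isFsigma_fibers (isFsigma_setOf_branch_eq hopen hfs (k + 1)) _

end Fibers

variable [PseudoMetricSpace Y]
  (hdiam : ∀ k n a b, j a ∈ u k n → j b ∈ u k n → dist a b ≤ (1 / 2 : ℝ) ^ k)
include hdiam

theorem dist_le_of_mem_cell {s : List ℕ} {k : ℕ} (hs : s.length = k + 1) {a b : Y}
    (ha : j a ∈ cell u s) (hb : j b ∈ cell u s) : dist a b ≤ (1 / 2 : ℝ) ^ k := by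
  cases s with
  | nil => simp at hs
  | cons m t =>
    obtain rfl : t.length = k := by simpa using hs
    exact hdiam _ m a b ha.1 hb.1

theorem dist_approx_succ_le [Nonempty Y] (x : X) (k : ℕ) :
    dist (approx j u k x) (approx j u (k + 1) x) ≤ (1 / 2 : ℝ) ^ k := by
  have hcell := (mem_cell_branch (j := j) (u := u) x (k + 1)).2
  have hlen := length_branch (j := j) (u := u) (x := x) (k := k + 1)
  change dist (center j u (branch j u x (k + 1)))
    (center j u (step j u x (branch j u x (k + 1)))) ≤ _
  generalize branch j u x (k + 1) = s at hcell hlen ⊢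
  rcases step_eq_self_or j u x s with h | ⟨n, hn, h⟩
  · rw [h, dist_self]
    positivity
  · rw [h]
    exact dist_le_of_mem_cell hdiam (hlen (h ▸ List.cons_ne_self n s)) (center_mem hcell)
      (center_mem hn.2).2

theorem tendsto_approx_retraction [Nonempty Y] [CompleteSpace Y] (x : X) :
    Tendsto (fun k => approx j u k x) atTop (𝓝 (retraction j u x)) :=
  (cauchySeq_of_le_geometric (1 / 2) 1 (by norm_num)
    (by simpa using dist_approx_succ_le hdiam x)).tendsto_limUnder

theorem tendstoUniformly_approx_retraction [Nonempty Y] [CompleteSpace Y] :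
    TendstoUniformly (approx j u) (retraction j u) atTop := by
  have hbound : ∀ k x, dist (approx j u k x) (retraction j u x) ≤ 2 * (1 / 2 : ℝ) ^ k := by
    intro k x
    have := dist_le_of_le_geometric_of_tendsto (1 / 2) 1 (by norm_num)
      (by simpa using dist_approx_succ_le hdiam x) (tendsto_approx_retraction hdiam x) k
    exact this.trans_eq (by ring)
  have hlim : Tendsto (fun k => 2 * (1 / 2 : ℝ) ^ k) atTop (𝓝 0) := by
    simpa using (tendsto_pow_atTop_nhds_zero_of_lt_one (by norm_num : (0 : ℝ) ≤ 1 / 2)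
      (by norm_num)).const_mul 2
  rw [Metric.tendstoUniformly_iff]
  intro ε hε
  filter_upwards [hlim.eventually (gt_mem_nhds hε)] with k hk x
  rw [dist_comm]
  exact (hbound k x).trans_lt hk

theorem leftInverse_retraction [Nonempty Y] [CompleteSpace Y] [T2Space Y]
    (hcov : ∀ k y, ∃ n, j y ∈ u k n) : Function.LeftInverse (retraction j u) j := by
  intro y
  have hlen : ∀ k, (branch j u (j y) k).length = k := by
    intro k
    refine length_branch (step_ne_self (n := (hcov _ y).choose) ⟨(hcov _ y).choose_spec, ?_⟩)
    exact ⟨y, (hcov _ y).choose_spec, (mem_cell_branch (j y) k).1⟩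
  have hdist : ∀ k, dist (approx j u k (j y)) y ≤ (1 / 2 : ℝ) ^ k := fun k =>
    dist_le_of_mem_cell hdiam (hlen (k + 1)) (center_mem (mem_cell_branch (j y) (k + 1)).2)
      (mem_cell_branch (j y) (k + 1)).1
  have hy : Tendsto (fun k => approx j u k (j y)) atTop (𝓝 y) :=
    tendsto_iff_dist_tendsto_zero.2 <| squeeze_zero (fun _ => dist_nonneg) hdist
      (tendsto_pow_atTop_nhds_zero_of_lt_one (by norm_num) (by norm_num))
  exact tendsto_nhds_unique (tendsto_approx_retraction hdiam (j y)) hy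

end GreedyRetraction

open GreedyRetraction TopologicalSpace

theorem isH1Retract_of_separable_completelyMetrizable_general {X : Type*} [TopologicalSpace X]
    [CompletelyRegularSpace X]
    (E : Set X) (hne : E.Nonempty) [TopologicalSpace.SeparableSpace E]
    (hcm : CompletelyMetrizable E) :
    IsH1Retract E := by
  have : Nonempty E := hne.to_subtype
  have : IsCompletelyMetrizableSpace E := ⟨hcm⟩
  let := upgradeIsCompletelyMetrizable E
  choose u hopen hfs hcov hdiam using fun k : ℕ =>
    exists_isOpen_isFsigma_cover_of_isInducing (j := ((↑) : E → X)) IsInducing.subtypeVal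
      (pow_pos (by norm_num : (0 : ℝ) < 1 / 2) k)
  exact ⟨retraction _ u, leftInverse_retraction hdiam hcov,
    (tendstoUniformly_approx_retraction hdiam).lebesgueClassOne
      (lebesgueClassOne_approx hopen hfs)⟩

/-- A nonempty separable completely metrizable subspace of a completely regular Hausdorff
space is an H₁-retract. -/
theorem isH1Retract_of_separable_completelyMetrizable {X : Type*} [TopologicalSpace X]
    [CompletelyRegularSpace X] [T2Space X]
    (E : Set X) (hne : E.Nonempty) [TopologicalSpace.SeparableSpace E]
    (hcm : CompletelyMetrizable E) :
    IsH1Retract E :=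
  isH1Retract_of_separable_completelyMetrizable_general E hne hcm
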